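/- Let K be a field of characteristic zero, X a finite connected poset, and fix u_0 ∈ X. Then each diagonality-preserving φ ∈ Δ(I(X,K)) is uniquely representable in the form φ = φ_σ + φ_κ, where σ : X²_< → K is a map constant on chains and constant on cycles in X and κ : X → K is a map. -/

import Mathlib

open scoped Classical

noncomputable section

attribute [local instance 100] LieRing.ofAssociativeRing

/-- A `1/2`-derivation of a Lie algebra `L` over `K`:
`φ ⁅a, b⁆ = (1/2) • (⁅φ a, b⁆ + ⁅a, φ b⁆)`. -/
def IsHalfDerivation (K L : Type*) [Field K] [LieRing L] [LieAlgebra K L]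
    (φ : L →ₗ[K] L) : Prop :=
  ∀ a b : L, φ ⁅a, b⁆ = (2⁻¹ : K) • (⁅φ a, b⁆ + ⁅a, φ b⁆)

/-- The standard basis element `e_{xy}` (for `x ≤ y`) of the incidence algebra. -/
def eI (K : Type*) {X : Type*} [Field K] [PartialOrder X] [DecidableEq X]
    (x y : X) (h : x ≤ y) : IncidenceAlgebra K X :=
  ⟨fun u v => if x = u ∧ y = v then (1 : K) else 0, by
    intro u v huv
    show (if x = u ∧ y = v then (1 : K) else 0) = 0
    rw [if_neg]; rintro ⟨rfl, rfl⟩; exact huv h⟩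

/-- Diagonal elements of the incidence algebra (the subspace `D(X,K)`). -/
def IsDiagI {K X : Type*} [Zero K] [LE X] (f : IncidenceAlgebra K X) : Prop :=
  ∀ x y : X, x ≠ y → f x y = 0

/-- A walk `u 0, u 1, …, u m` in a poset: consecutive vertices are comparable and
cover one another (`l(x,y) = 1`). -/
def IsWalkOn {X : Type*} [PartialOrder X] (u : ℕ → X) (m : ℕ) : Prop :=
  ∀ i < m, u i ⋖ u (i + 1) ∨ u (i + 1) ⋖ u i

/-- A poset is connected if any two of its elements are joined by a walk. -/
def ConnectedPoset (X : Type*) [PartialOrder X] : Prop :=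
  ∀ x y : X, ∃ (u : ℕ → X) (m : ℕ), IsWalkOn u m ∧ u 0 = x ∧ u m = y

/-- The set `X²_<` of pairs `(x, y)` with `x < y`. -/
def LtPairs (X : Type*) [PartialOrder X] : Type _ := {p : X × X // p.1 < p.2}

/-- The value of `σ : X²_< → K` at `(x, y)`, extended by `0` to all pairs. -/
def sigVal {K X : Type*} [Field K] [PartialOrder X] (σ : LtPairs X → K) (x y : X) : K :=
  if h : x < y then σ ⟨(x, y), h⟩ else 0

/-- `s⁺_{σ,Γ}(x) = Σ_{x = u i < u (i+1)} σ (x, u (i+1))`. -/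
def sP {K X : Type*} [Field K] [PartialOrder X] (σ : LtPairs X → K)
    (u : ℕ → X) (m : ℕ) (x : X) : K :=
  ∑ i ∈ Finset.range m, if x = u i then sigVal σ x (u (i + 1)) else 0

/-- `s⁻_{σ,Γ}(x) = Σ_{u i > u (i+1) = x} σ (x, u i)`. -/
def sM {K X : Type*} [Field K] [PartialOrder X] (σ : LtPairs X → K)
    (u : ℕ → X) (m : ℕ) (x : X) : K :=
  ∑ i ∈ Finset.range m, if x = u (i + 1) then sigVal σ x (u i) else 0

/-- `t⁺_{σ,Γ}(x) = Σ_{x = u i > u (i+1)} σ (u (i+1), x)`. -/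
def tP {K X : Type*} [Field K] [PartialOrder X] (σ : LtPairs X → K)
    (u : ℕ → X) (m : ℕ) (x : X) : K :=
  ∑ i ∈ Finset.range m, if x = u i then sigVal σ (u (i + 1)) x else 0

/-- `t⁻_{σ,Γ}(x) = Σ_{u i < u (i+1) = x} σ (u i, x)`. -/
def tM {K X : Type*} [Field K] [PartialOrder X] (σ : LtPairs X → K)
    (u : ℕ → X) (m : ℕ) (x : X) : K :=
  ∑ i ∈ Finset.range m, if x = u (i + 1) then sigVal σ (u i) x else 0

/-- A cycle: a closed walk `u 0, …, u m = u 0` with `m ≥ 4` such that repeated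
vertices occur only at the pair of indices `{0, m}`. -/
def IsCycleW {X : Type*} [PartialOrder X] (u : ℕ → X) (m : ℕ) : Prop :=
  IsWalkOn u m ∧ u m = u 0 ∧ 4 ≤ m ∧
    ∀ i ≤ m, ∀ j ≤ m, i ≠ j → u i = u j → (i = 0 ∧ j = m) ∨ (i = m ∧ j = 0)

/-- `σ` is constant on cycles. -/
def ConstOnCycles {K X : Type*} [Field K] [PartialOrder X] (σ : LtPairs X → K) : Prop :=
  ∀ (u : ℕ → X) (m : ℕ), IsCycleW u m →
    ∃ k : K, ∀ i < m,
      (∀ h : u i < u (i + 1), σ ⟨(u i, u (i + 1)), h⟩ = k) ∧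
      (∀ h : u (i + 1) < u i, σ ⟨(u (i + 1), u i), h⟩ = k)

/-- `σ` is constant on chains: `σ (x, y) = σ (u, v)` whenever `x < y` and `u < v` all
belong to a common chain, i.e. `{x, y, u, v}` is pairwise comparable. -/
def ConstOnChains {K X : Type*} [Field K] [PartialOrder X] (σ : LtPairs X → K) : Prop :=
  ∀ (x y u v : X) (h1 : x < y) (h2 : u < v),
    (x ≤ u ∨ u ≤ x) → (x ≤ v ∨ v ≤ x) → (y ≤ u ∨ u ≤ y) → (y ≤ v ∨ v ≤ y) →
      σ ⟨(x, y), h1⟩ = σ ⟨(u, v), h2⟩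


/-!
Write `a z w` for the `(w, w)` entry of the diagonal element `φ e_z`. Comparing entries in the
`1/2`-derivation identity for `⁅e_x, e_{xy}⁆ = e_{xy}`, `⁅e_{xy}, e_y⁆ = e_{xy}` and
`⁅e_z, e_{xy}⁆ = 0` (`z ≠ x, y`) gives `φ e_{xy} = σ(x,y) e_{xy}` with `σ(x,y) = a x x - a x y`,
the symmetry `σ(x,y) = a y y - a y x`, and that `a z` takes equal values on comparable elements
different from `z`. The last fact moves `σ` along chains; on a cycle it shows that `a (u j)` agrees
at both neighbours of `u j`, so `σ` is constant around the cycle. Finally `φ_κ` with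
`κ(x) = a x u₀` kills commutators and has central values, so `φ - φ_κ` is the required `φ_σ`;
evaluating at `e_{xy}` and at the entry `(u₀, u₀)` of `φ e_x` gives uniqueness.
-/

section SigmaOf

variable {K X : Type*} [PartialOrder X] {a : X → X → K}

def sigmaOf [Sub K] (a : X → X → K) (x y : X) : K := a x x - a x y

lemma apply_eq_of_comparable
    (hconst : ∀ ⦃x y z : X⦄, x < y → z ≠ x → z ≠ y → a z x = a z y)
    {x y z : X} (hxy : x ≤ y ∨ y ≤ x) (hx : z ≠ x) (hy : z ≠ y) : a z x = a z y := by
  rcases eq_or_ne x y with rfl | hne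
  · rfl
  rcases hxy with hxy | hxy
  · exact hconst (hxy.lt_of_ne hne) hx hy
  · exact (hconst (hxy.lt_of_ne hne.symm) hy hx).symm

lemma apply_eq_of_walk_avoiding
    (hconst : ∀ ⦃x y z : X⦄, x < y → z ≠ x → z ≠ y → a z x = a z y)
    {u : ℕ → X} {z : X} {i k : ℕ} (hik : i ≤ k)
    (hwalk : ∀ j, i ≤ j → j < k → u j ≤ u (j + 1) ∨ u (j + 1) ≤ u j)
    (havoid : ∀ j, i ≤ j → j ≤ k → u j ≠ z) : a z (u i) = a z (u k) := by
  induction k, hik using Nat.le_induction with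
  | base => rfl
  | succ k hik ih =>
    rw [ih (fun j hij hjk => hwalk j hij (by omega)) (fun j hij hjk => havoid j hij (by omega))]
    exact apply_eq_of_comparable hconst (hwalk k hik k.lt_succ_self)
      (havoid k hik k.le_succ).symm (havoid (k + 1) (by omega) le_rfl).symm

/-- In a cycle, `u j` is joined to both of its neighbours by the rest of the cycle. -/
lemma IsCycleW.apply_succ_eq_apply_pred
    (hconst : ∀ ⦃x y z : X⦄, x < y → z ≠ x → z ≠ y → a z x = a z y)
    {u : ℕ → X} {m : ℕ} (hcyc : IsCycleW u m) {j : ℕ} (hj : 1 ≤ j) (hjm : j < m) :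
    a (u j) (u (j + 1)) = a (u j) (u (j - 1)) := by
  obtain ⟨hwalk, hclose, -, hinj⟩ := hcyc
  have hcomp : ∀ i, i < m → u i ≤ u (i + 1) ∨ u (i + 1) ≤ u i := fun i hi =>
    (hwalk i hi).imp CovBy.le CovBy.le
  have hne : ∀ i ≤ m, i ≠ j → u i ≠ u j := fun i him hij hu => by
    rcases hinj i him j hjm.le hij hu with ⟨-, hj'⟩ | ⟨-, hj'⟩ <;> omega
  calc a (u j) (u (j + 1)) = a (u j) (u m) :=
        apply_eq_of_walk_avoiding hconst hjm (fun i _ him => hcomp i him)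
          (fun i hi him => hne i him (by omega))
    _ = a (u j) (u 0) := by rw [hclose]
    _ = a (u j) (u (j - 1)) :=
        apply_eq_of_walk_avoiding hconst (Nat.zero_le _) (fun i _ hi => hcomp i (by omega))
          (fun i _ hi => hne i (by omega) (by omega))

section Sub

variable [Sub K]

lemma sigmaOf_comm (hsymm : ∀ ⦃x y : X⦄, x < y → sigmaOf a x y = sigmaOf a y x)
    {x y : X} (hxy : x ≤ y ∨ y ≤ x) : sigmaOf a x y = sigmaOf a y x := by
  rcases eq_or_ne x y with rfl | hne
  · rfl
  rcases hxy with hxy | hxy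
  · exact hsymm (hxy.lt_of_ne hne)
  · exact (hsymm (hxy.lt_of_ne hne.symm)).symm

lemma sigmaOf_congr_right
    (hconst : ∀ ⦃x y z : X⦄, x < y → z ≠ x → z ≠ y → a z x = a z y)
    {x y y' : X} (hyy' : y ≤ y' ∨ y' ≤ y) (hy : x ≠ y) (hy' : x ≠ y') :
    sigmaOf a x y = sigmaOf a x y' := by
  rw [sigmaOf, sigmaOf, apply_eq_of_comparable hconst hyy' hy hy']

lemma sigmaOf_congr_left (hsymm : ∀ ⦃x y : X⦄, x < y → sigmaOf a x y = sigmaOf a y x)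
    (hconst : ∀ ⦃x y z : X⦄, x < y → z ≠ x → z ≠ y → a z x = a z y)
    {x x' y : X} (hxx' : x ≤ x' ∨ x' ≤ x) (hxy : x ≤ y ∨ y ≤ x) (hx'y : x' ≤ y ∨ y ≤ x')
    (hx : x ≠ y) (hx' : x' ≠ y) : sigmaOf a x y = sigmaOf a x' y := by
  rw [sigmaOf_comm hsymm hxy, sigmaOf_congr_right hconst hxx' hx.symm hx'.symm,
    sigmaOf_comm hsymm hx'y.symm]

end Sub

variable [Field K]

theorem constOnChains_sigmaOf
    (hsymm : ∀ ⦃x y : X⦄, x < y → sigmaOf a x y = sigmaOf a y x)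
    (hconst : ∀ ⦃x y z : X⦄, x < y → z ≠ x → z ≠ y → a z x = a z y) :
    ConstOnChains fun p : LtPairs X => sigmaOf a p.1.1 p.1.2 := by
  rintro x y u v hxy huv hxu hxv - hyv
  show sigmaOf a x y = sigmaOf a u v
  rcases eq_or_ne x v with rfl | hxv'
  · have huy := huv.trans hxy
    rw [sigmaOf_congr_left hsymm hconst hxu (.inl hxy.le) (.inl huy.le) hxy.ne huy.ne,
      sigmaOf_congr_right hconst (.inr hxy.le) huy.ne huv.ne]
  · rw [sigmaOf_congr_right hconst hyv hxy.ne hxv',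
      sigmaOf_congr_left hsymm hconst hxu hxv (.inl huv.le) hxv' huv.ne]

theorem constOnCycles_sigmaOf
    (hsymm : ∀ ⦃x y : X⦄, x < y → sigmaOf a x y = sigmaOf a y x)
    (hconst : ∀ ⦃x y z : X⦄, x < y → z ≠ x → z ≠ y → a z x = a z y) :
    ConstOnCycles fun p : LtPairs X => sigmaOf a p.1.1 p.1.2 := by
  intro u m hcyc
  have hcomp : ∀ i, i < m → u i ≤ u (i + 1) ∨ u (i + 1) ≤ u i := fun i hi =>
    (hcyc.1 i hi).imp CovBy.le CovBy.le
  have hstep : ∀ i, i + 1 < m →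
      sigmaOf a (u (i + 1)) (u (i + 1 + 1)) = sigmaOf a (u i) (u (i + 1)) := fun i hi => by
    rw [sigmaOf, hcyc.apply_succ_eq_apply_pred hconst (by omega) hi, Nat.add_sub_cancel,
      ← sigmaOf, sigmaOf_comm hsymm (hcomp i (by omega)).symm]
  have hedge : ∀ i < m, sigmaOf a (u i) (u (i + 1)) = sigmaOf a (u 0) (u 1) := by
    intro i
    induction i with
    | zero => intro _; rfl
    | succ i ih => intro hi; rw [hstep i hi, ih (by omega)]
  refine ⟨sigmaOf a (u 0) (u 1), fun i hi => ⟨fun _ => hedge i hi, fun _ => ?_⟩⟩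
  exact (sigmaOf_comm hsymm (hcomp i hi).symm).trans (hedge i hi)

end SigmaOf

section Entries

variable {K X : Type*} [Field K] [PartialOrder X] [DecidableEq X]

lemma eI_apply (x y : X) (h : x ≤ y) (u v : X) :
    eI K x y h u v = if x = u ∧ y = v then 1 else 0 := rfl

lemma eI_self_isDiagI (x : X) : IsDiagI (eI K x x le_rfl) := by
  intro u v huv
  rw [eI_apply, if_neg]
  rintro ⟨rfl, rfl⟩
  exact huv rfl

variable [LocallyFiniteOrder X]

lemma eI_mul_apply (x y : X) (h : x ≤ y) (f : IncidenceAlgebra K X) (u v : X) :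
    (eI K x y h * f) u v = if x = u then f y v else 0 := by
  rw [IncidenceAlgebra.mul_apply]
  split_ifs with hxu
  · subst hxu
    simp only [eI_apply, true_and, ite_mul, one_mul, zero_mul, Finset.sum_ite_eq,
      Finset.mem_Icc]
    split_ifs with hy
    · rfl
    · exact (IncidenceAlgebra.apply_eq_zero_of_not_le (fun hyv => hy ⟨h, hyv⟩) f).symm
  · exact Finset.sum_eq_zero fun w _ => by rw [eI_apply, if_neg (fun hh => hxu hh.1), zero_mul]

lemma mul_eI_apply (x y : X) (h : x ≤ y) (f : IncidenceAlgebra K X) (u v : X) :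
    (f * eI K x y h) u v = if y = v then f u x else 0 := by
  rw [IncidenceAlgebra.mul_apply]
  split_ifs with hyv
  · subst hyv
    simp only [eI_apply, and_true, mul_ite, mul_one, mul_zero, Finset.sum_ite_eq,
      Finset.mem_Icc]
    split_ifs with hx
    · rfl
    · exact (IncidenceAlgebra.apply_eq_zero_of_not_le (fun hux => hx ⟨hux, h⟩) f).symm
  · exact Finset.sum_eq_zero fun w _ => by rw [eI_apply, if_neg (fun hh => hyv hh.2), mul_zero]

lemma IncidenceAlgebra.lie_apply (f g : IncidenceAlgebra K X) (u v : X) :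
    ⁅f, g⁆ u v = (f * g) u v - (g * f) u v := by
  rw [Ring.lie_def, IncidenceAlgebra.sub_apply]

lemma IncidenceAlgebra.lie_apply_self (f g : IncidenceAlgebra K X) (x : X) : ⁅f, g⁆ x x = 0 := by
  simp only [IncidenceAlgebra.lie_apply, IncidenceAlgebra.mul_apply, Finset.Icc_self,
    Finset.sum_singleton, mul_comm, sub_self]

lemma IsDiagI.lie_apply {D : IncidenceAlgebra K X} (hD : IsDiagI D)
    (g : IncidenceAlgebra K X) (u v : X) : ⁅D, g⁆ u v = (D u u - D v v) * g u v := by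
  rw [IncidenceAlgebra.lie_apply, IncidenceAlgebra.mul_apply, IncidenceAlgebra.mul_apply]
  by_cases huv : u ≤ v
  · rw [Finset.sum_eq_single_of_mem u (Finset.left_mem_Icc.2 huv)
        fun w _ hw => by rw [hD u w (Ne.symm hw), zero_mul],
      Finset.sum_eq_single_of_mem v (Finset.right_mem_Icc.2 huv)
        fun w _ hw => by rw [hD w v hw, mul_zero]]
    ring
  · simp [Finset.Icc_eq_empty huv, IncidenceAlgebra.apply_eq_zero_of_not_le huv]

lemma lie_eI_self_apply (x : X) (g : IncidenceAlgebra K X) (u v : X) :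
    ⁅eI K x x le_rfl, g⁆ u v = (if x = u then g x v else 0) - (if x = v then g u x else 0) := by
  rw [IncidenceAlgebra.lie_apply, eI_mul_apply, mul_eI_apply]

lemma lie_eI_self_eI (x y : X) (h : x < y) :
    ⁅eI K x x le_rfl, eI K x y h.le⁆ = eI K x y h.le := by
  ext u v _
  simp only [lie_eI_self_apply, eI_apply]
  split_ifs <;> simp_all

lemma lie_eI_eI_self (x y : X) (h : x < y) :
    ⁅eI K x y h.le, eI K y y le_rfl⁆ = eI K x y h.le := by
  ext u v _
  rw [← lie_skew, IncidenceAlgebra.neg_apply, lie_eI_self_apply]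
  simp only [eI_apply]
  split_ifs <;> simp_all

lemma lie_eI_self_eI_of_ne (x y z : X) (h : x < y) (hzx : z ≠ x) (hzy : z ≠ y) :
    ⁅eI K z z le_rfl, eI K x y h.le⁆ = 0 := by
  ext u v _
  simp only [lie_eI_self_apply, eI_apply, IncidenceAlgebra.zero_apply]
  split_ifs <;> simp_all

end Entries

section HalfDerivation

variable {K X : Type*} [Field K] [PartialOrder X] [LocallyFiniteOrder X] [DecidableEq X]

def diagCoeff (φ : IncidenceAlgebra K X →ₗ[K] IncidenceAlgebra K X) (z w : X) : K :=
  φ (eI K z z le_rfl) w w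

variable [CharZero K] {φ : IncidenceAlgebra K X →ₗ[K] IncidenceAlgebra K X}
  (hφ : IsHalfDerivation K (IncidenceAlgebra K X) φ)
  (hdiag : ∀ f : IncidenceAlgebra K X, IsDiagI f → IsDiagI (φ f))
include hφ hdiag

lemma diagCoeff_eq_of_lt {x y z : X} (h : x < y) (hzx : z ≠ x) (hzy : z ≠ y) :
    diagCoeff φ z x = diagCoeff φ z y := by
  have hent := congrArg (fun g : IncidenceAlgebra K X => g x y)
    (hφ (eI K z z le_rfl) (eI K x y h.le))
  simp only [lie_eI_self_eI_of_ne x y z h hzx hzy, map_zero, IncidenceAlgebra.zero_apply,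
    IncidenceAlgebra.constSMul_apply, IncidenceAlgebra.add_apply,
    (hdiag _ (eI_self_isDiagI z)).lie_apply, lie_eI_self_apply, if_neg hzx, if_neg hzy,
    eI_apply, and_self, if_true, smul_eq_mul] at hent
  rw [diagCoeff, diagCoeff]
  linear_combination (-2 : K) * hent

lemma apply_eI_of_lt {x y : X} (h : x < y) :
    φ (eI K x y h.le) = sigmaOf (diagCoeff φ) x y • eI K x y h.le := by
  ext u v _
  have hent := congrArg (fun g : IncidenceAlgebra K X => g u v)
    (hφ (eI K x x le_rfl) (eI K x y h.le))
  simp only [lie_eI_self_eI x y h, IncidenceAlgebra.constSMul_apply,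
    IncidenceAlgebra.add_apply, (hdiag _ (eI_self_isDiagI x)).lie_apply, lie_eI_self_apply,
    smul_eq_mul] at hent
  rw [IncidenceAlgebra.constSMul_apply, smul_eq_mul, sigmaOf, diagCoeff, diagCoeff]
  set f := φ (eI K x y h.le)
  set D := φ (eI K x x le_rfl)
  rcases eq_or_ne x u with rfl | hu
  · rcases eq_or_ne x v with rfl | hv
    · simp only [if_true, sub_self, zero_mul, add_zero, mul_zero] at hent
      simp [hent, eI_apply, h.ne']
    · rw [if_pos rfl, if_neg hv] at hent
      have hfxv : f x v = (D x x - D v v) * eI K x y h.le x v := by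
        linear_combination 2 * hent
      rw [hfxv]
      rcases eq_or_ne y v with rfl | hyv
      · rfl
      · simp [eI_apply, hyv]
  · have hux : eI K x y h.le u v = 0 := by simp [eI_apply, hu]
    rw [hux, if_neg hu] at hent
    rw [hux, mul_zero]
    rcases eq_or_ne x v with rfl | hv
    · rw [if_pos rfl] at hent
      -- here the relation reads `f u x = -f u x / 2`
      have h3 : (3 : K) * f u x = 0 := by linear_combination 2 * hent
      exact (mul_eq_zero.1 h3).resolve_left three_ne_zero
    · rw [if_neg hv] at hent
      linear_combination hent

lemma sigmaOf_diagCoeff_symm {x y : X} (h : x < y) :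
    sigmaOf (diagCoeff φ) x y = sigmaOf (diagCoeff φ) y x := by
  have hent := congrArg (fun g : IncidenceAlgebra K X => g x y)
    (hφ (eI K x y h.le) (eI K y y le_rfl))
  simp only [lie_eI_eI_self x y h, apply_eI_of_lt hφ hdiag h, smul_lie, ← lie_skew (eI K x y _),
    IncidenceAlgebra.constSMul_apply, IncidenceAlgebra.add_apply, IncidenceAlgebra.neg_apply,
    (hdiag _ (eI_self_isDiagI y)).lie_apply, eI_apply, and_self, if_true, smul_eq_mul] at hent
  simp only [sigmaOf, diagCoeff] at hent ⊢
  linear_combination 2 * hent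

end HalfDerivation

section PhiKappa

variable {K X : Type*} [Field K] [PartialOrder X] [Fintype X] [LocallyFiniteOrder X]
  [DecidableEq X]

/-- The linear extension `φ_κ` of `e_x ↦ κ(x) δ`, `e_{xy} ↦ 0`. -/
def phiKappa (κ : X → K) : IncidenceAlgebra K X →ₗ[K] IncidenceAlgebra K X where
  toFun f := (∑ x, κ x * f x x) • 1
  map_add' f g := by
    simp only [IncidenceAlgebra.add_apply, mul_add, Finset.sum_add_distrib, add_smul]
  map_smul' c f := by
    simp only [IncidenceAlgebra.constSMul_apply, smul_eq_mul, mul_left_comm _ c,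
      ← Finset.mul_sum, mul_smul, RingHom.id_apply]

lemma phiKappa_apply (κ : X → K) (f : IncidenceAlgebra K X) :
    phiKappa κ f = (∑ x, κ x * f x x) • 1 := rfl

lemma phiKappa_eI_self (κ : X → K) (x : X) : phiKappa κ (eI K x x le_rfl) = κ x • 1 := by
  simp [phiKappa_apply, eI_apply]

lemma phiKappa_eI_of_lt (κ : X → K) {x y : X} (h : x < y) : phiKappa κ (eI K x y h.le) = 0 := by
  rw [phiKappa_apply, Finset.sum_eq_zero, zero_smul]
  rintro z -
  rw [eI_apply, if_neg fun hz => h.ne (hz.1.trans hz.2.symm), mul_zero]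

lemma phiKappa_apply_isDiagI (κ : X → K) (f : IncidenceAlgebra K X) :
    IsDiagI (phiKappa κ f) := fun x y hxy => by
  simp [phiKappa_apply, IncidenceAlgebra.constSMul_apply, hxy]

lemma IsHalfDerivation.sub_phiKappa {φ : IncidenceAlgebra K X →ₗ[K] IncidenceAlgebra K X}
    (hφ : IsHalfDerivation K (IncidenceAlgebra K X) φ) (κ : X → K) :
    IsHalfDerivation K (IncidenceAlgebra K X) (φ - phiKappa κ) := by
  have hlie : ∀ f g : IncidenceAlgebra K X, phiKappa κ ⁅f, g⁆ = 0 := fun f g => by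
    simp [phiKappa_apply, IncidenceAlgebra.lie_apply_self]
  have hcentral : ∀ f g : IncidenceAlgebra K X, ⁅phiKappa κ f, g⁆ = 0 := fun f g => by
    simp [phiKappa_apply, Ring.lie_def]
  have hcentral' : ∀ f g : IncidenceAlgebra K X, ⁅g, phiKappa κ f⁆ = 0 := fun f g => by
    rw [← lie_skew, hcentral, neg_zero]
  intro f g
  simp only [LinearMap.sub_apply, hlie, sub_zero, hφ f g, sub_lie, lie_sub, hcentral,
    hcentral']

end PhiKappa

theorem statement16_general (K X : Type*) [Field K] [CharZero K] [PartialOrder X] [Fintype X]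
    [LocallyFiniteOrder X] [DecidableEq X] (u0 : X)
    (φ : IncidenceAlgebra K X →ₗ[K] IncidenceAlgebra K X)
    (hφ : IsHalfDerivation K (IncidenceAlgebra K X) φ)
    (hdiag : ∀ f : IncidenceAlgebra K X, IsDiagI f → IsDiagI (φ f)) :
    ∃! p : (LtPairs X → K) × (X → K),
      ConstOnChains p.1 ∧ ConstOnCycles p.1 ∧
      ∃ φσ φκ : IncidenceAlgebra K X →ₗ[K] IncidenceAlgebra K X,
        IsHalfDerivation K (IncidenceAlgebra K X) φσ ∧
        (∀ f : IncidenceAlgebra K X, IsDiagI f → IsDiagI (φσ f)) ∧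
        (∀ (x y : X) (h : x < y), φσ (eI K x y h.le) = p.1 ⟨(x, y), h⟩ • eI K x y h.le) ∧
        (∀ x : X, φσ (eI K x x le_rfl) u0 u0 = 0) ∧
        (∀ x : X, φκ (eI K x x le_rfl) = p.2 x • (1 : IncidenceAlgebra K X)) ∧
        (∀ (x y : X) (h : x < y), φκ (eI K x y h.le) = 0) ∧
        (∀ a : IncidenceAlgebra K X, φ a = φσ a + φκ a) := by
  have hsymm : ∀ ⦃x y : X⦄, x < y → sigmaOf (diagCoeff φ) x y = sigmaOf (diagCoeff φ) y x :=
    fun _ _ h => sigmaOf_diagCoeff_symm hφ hdiag h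
  have hconst : ∀ ⦃x y z : X⦄, x < y → z ≠ x → z ≠ y → diagCoeff φ z x = diagCoeff φ z y :=
    fun _ _ _ h hzx hzy => diagCoeff_eq_of_lt hφ hdiag h hzx hzy
  let κ : X → K := fun x => diagCoeff φ x u0
  refine ⟨(fun p => sigmaOf (diagCoeff φ) p.1.1 p.1.2, κ),
    ⟨constOnChains_sigmaOf hsymm hconst, constOnCycles_sigmaOf hsymm hconst,
      φ - phiKappa κ, phiKappa κ, hφ.sub_phiKappa κ,
      fun f hf x y hxy => by
        rw [LinearMap.sub_apply, IncidenceAlgebra.sub_apply, hdiag f hf x y hxy,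
          phiKappa_apply_isDiagI κ f x y hxy, sub_zero],
      fun x y h => by rw [LinearMap.sub_apply, phiKappa_eI_of_lt κ h, sub_zero,
        apply_eI_of_lt hφ hdiag h],
      fun x => by simp [phiKappa_eI_self, κ, diagCoeff],
      phiKappa_eI_self κ, fun _ _ h => phiKappa_eI_of_lt κ h,
      fun f => (sub_add_cancel _ _).symm⟩, ?_⟩
  rintro ⟨σ', κ'⟩ ⟨-, -, φσ, φκ, -, -, hσ, hσ0, hκ, hκ0, hsum⟩
  refine Prod.ext (funext fun ⟨(x, y), h⟩ => ?_) (funext fun x => ?_)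
  · have := congrArg (fun g : IncidenceAlgebra K X => g x y) (hsum (eI K x y h.le))
    rw [hσ x y h, hκ0 x y h, add_zero, apply_eI_of_lt hφ hdiag h] at this
    simpa [eI_apply] using this.symm
  · have := congrArg (fun g : IncidenceAlgebra K X => g u0 u0) (hsum (eI K x x le_rfl))
    simpa [hσ0, hκ, κ, diagCoeff] using this.symm

/-- every diagonality-preserving `1/2`-derivation `φ` of `I(X,K)` is
uniquely `φ = φ_σ + φ_κ`, where `σ : X²_< → K` is constant on chains and cycles,
`κ : X → K`, `φ_σ` is the diagonality-preserving `1/2`-derivation with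
`φ_σ e_{xy} = σ(x,y) e_{xy}` and `φ_σ(e_x)(u0,u0) = 0`, and `φ_κ` is the linear map
with `φ_κ e_x = κ(x) δ` and `φ_κ e_{xy} = 0` for `x < y`. -/
theorem statement16 (K X : Type*) [Field K] [CharZero K] [PartialOrder X] [Fintype X]
    [LocallyFiniteOrder X] [DecidableEq X] (hconn : ConnectedPoset X) (u0 : X)
    (φ : IncidenceAlgebra K X →ₗ[K] IncidenceAlgebra K X)
    (hφ : IsHalfDerivation K (IncidenceAlgebra K X) φ)
    (hdiag : ∀ f : IncidenceAlgebra K X, IsDiagI f → IsDiagI (φ f)) :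
    ∃! p : (LtPairs X → K) × (X → K),
      ConstOnChains p.1 ∧ ConstOnCycles p.1 ∧
      ∃ φσ φκ : IncidenceAlgebra K X →ₗ[K] IncidenceAlgebra K X,
        IsHalfDerivation K (IncidenceAlgebra K X) φσ ∧
        (∀ f : IncidenceAlgebra K X, IsDiagI f → IsDiagI (φσ f)) ∧
        (∀ (x y : X) (h : x < y), φσ (eI K x y h.le) = p.1 ⟨(x, y), h⟩ • eI K x y h.le) ∧
        (∀ x : X, φσ (eI K x x le_rfl) u0 u0 = 0) ∧
        (∀ x : X, φκ (eI K x x le_rfl) = p.2 x • (1 : IncidenceAlgebra K X)) ∧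
        (∀ (x y : X) (h : x < y), φκ (eI K x y h.le) = 0) ∧
        (∀ a : IncidenceAlgebra K X, φ a = φσ a + φκ a) :=
  statement16_general K X u0 φ hφ hdiag
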